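/- Let T be an ABC-tile having exactly 14 neighbors, let α be a neighbor of T, let P = (1,0,0), and let i, j be integers with 1 ≤ j ≤ i ≤ C − 1. Write B_γ = T ∩ (T + γ) for γ ∈ ℤ³. Then (B_α + (i−j)·P) ∩ (B_α + i·P) = ∅ and (B_α + (i−j)·P) ∩ (B_{α+P} + i·P) = ∅. -/

import Mathlib

/-!
Write `P = (1,0,0)`. By the set equation `M⁻¹ (x + b P) ∈ T` for `x ∈ T` and digits `0 ≤ b < C`,
so if `M v = w + c P` with `|c| < C`, then `M⁻¹ (d + c P) ∈ T - T` for every `d ∈ T - T`: a point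
`w - e` of `T - T` yields the point `v - M⁻¹ e`. All roots of `x³ + A x² + B x + C` lie outside
the unit disc, so `M⁻ⁿ → 0`. Hence in a finite set of vectors each of which has such a successor
in the set, every vector is a limit of points of the compact set `T - T`, i.e. a neighbour of `T`
or `0`. The fourteen vectors `±(1,0,0), ±(A-1,1,0), ±(A,1,0), ±(B-A,A-1,1), ±(B-A+1,A-1,1),
±(B-1,A,1), ±(B,A,1)` form such a set, so when `T` has exactly 14 neighbours these are all of
them. A point in the first intersection would make `j P`, `j P + α` and `j P - α` neighbours or
`0`, a point in the second `(j + 1) P`; no `α` among the fourteen allows this.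
-/

open MeasureTheory

noncomputable def Mmat (A B C : ℤ) : Matrix (Fin 3) (Fin 3) ℝ :=
  !![0, 0, -(C : ℝ); 1, 0, -(B : ℝ); 0, 1, -(A : ℝ)]

def Ddig (C : ℤ) : Set (Fin 3 → ℝ) :=
  {d | ∃ i : ℤ, 0 ≤ i ∧ i < C ∧ d = ![(i : ℝ), 0, 0]}

def toR (α : Fin 3 → ℤ) : Fin 3 → ℝ := fun i => (α i : ℝ)

def tileTranslate (v : Fin 3 → ℝ) (T : Set (Fin 3 → ℝ)) : Set (Fin 3 → ℝ) :=
  (fun x => x + v) '' T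

def IsABCTile (A B C : ℤ) (T : Set (Fin 3 → ℝ)) : Prop :=
  1 ≤ A ∧ A ≤ B ∧ B < C ∧
  T.Nonempty ∧ IsCompact T ∧ 0 < volume T ∧
  (Mmat A B C).mulVec '' T = ⋃ d ∈ Ddig C, tileTranslate d T

def Neighbors (T : Set (Fin 3 → ℝ)) : Set (Fin 3 → ℤ) :=
  {α | α ≠ 0 ∧ (T ∩ tileTranslate (toR α) T).Nonempty}

open Filter Topology Pointwise
open scoped Matrix

theorem one_lt_norm_of_cubic_eq_zero {A B C : ℝ} (hA : 1 ≤ A) (hAB : A ≤ B) (hBC : B < C)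
    {z : ℂ} (hz : z ^ 3 + A * z ^ 2 + B * z + C = 0) : 1 < ‖z‖ := by
  by_contra! hle
  have hre_le : ∀ k : ℕ, (z ^ k).re ≤ 1 := fun k =>
    (Complex.re_le_norm _).trans (by rw [norm_pow]; exact pow_le_one₀ (norm_nonneg z) hle)
  -- Nonnegative coefficients summing to `C`, against `Re zᵏ ≤ 1`: this forces `Re z = 1`.
  have hre : (z ^ 4).re + (A - 1) * (z ^ 3).re + (B - A) * (z ^ 2).re + (C - B) * z.re = C := by
    have h4 : z ^ 4 + (A - 1) * z ^ 3 + (B - A) * z ^ 2 + (C - B) * z = (C : ℂ) := by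
      linear_combination (z - 1) * hz
    simpa using congrArg Complex.re h4
  have hz1 : z = 1 := by
    have hre1 : z.re = 1 := le_antisymm ((Complex.re_le_norm z).trans hle)
      (by nlinarith [hre_le 4, hre_le 3, hre_le 2])
    have him : z.im = 0 := Complex.abs_re_eq_norm.1 <| by
      rw [hre1, abs_one]; exact le_antisymm (hre1 ▸ Complex.re_le_norm z) hle
    exact Complex.ext (by simp [hre1]) (by simp [him])
  subst hz1
  norm_num at hz
  have : 1 + A + B + C = 0 := by exact_mod_cast hz
  linarith

theorem tendsto_pow_atTop_nhds_zero_of_spectralRadius_lt_one {𝔸 : Type*} [NormedRing 𝔸]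
    [NormedAlgebra ℂ 𝔸] [CompleteSpace 𝔸] {a : 𝔸} (ha : spectralRadius ℂ a < 1) :
    Tendsto (fun n : ℕ => a ^ n) atTop (𝓝 0) := by
  obtain ⟨r, hr0, hρr, hr1⟩ := ENNReal.lt_iff_exists_real_btwn.1 ha
  have hbound : ∀ᶠ n : ℕ in atTop, ‖a ^ n‖ ≤ r ^ n := by
    filter_upwards [(spectrum.pow_norm_pow_one_div_tendsto_nhds_spectralRadius
      a).eventually_lt_const hρr, eventually_ne_atTop 0] with n hn hn0
    rw [ENNReal.ofReal_lt_ofReal_iff', one_div] at hn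
    calc ‖a ^ n‖ = (‖a ^ n‖ ^ (n⁻¹ : ℝ)) ^ n :=
          (Real.rpow_inv_natCast_pow (norm_nonneg _) hn0).symm
      _ ≤ r ^ n := pow_le_pow_left₀ (by positivity) hn.1.le n
  exact squeeze_zero_norm' hbound
    (tendsto_pow_atTop_nhds_zero_of_lt_one hr0 (ENNReal.ofReal_lt_one.1 hr1))

theorem spectralRadius_lt_one_of_forall_norm_lt_one {𝔸 : Type*} [NormedRing 𝔸]
    [NormedAlgebra ℂ 𝔸] [CompleteSpace 𝔸] [Nontrivial 𝔸] {a : 𝔸}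
    (ha : ∀ μ ∈ spectrum ℂ a, ‖μ‖ < 1) : spectralRadius ℂ a < 1 := by
  obtain ⟨μ, hμ, hρ⟩ := spectrum.exists_nnnorm_eq_spectralRadius_of_nonempty (spectrum.nonempty a)
  rw [← hρ]
  exact_mod_cast ha μ hμ

namespace Matrix

section Spectrum

variable {n : Type*} [Fintype n] [DecidableEq n] [Nonempty n]

section
attribute [local instance] Matrix.linftyOpNormedRing Matrix.linftyOpNormedAlgebra

theorem tendsto_pow_atTop_nhds_zero_of_forall_mem_spectrum {X : Matrix n n ℂ}
    (hX : ∀ μ ∈ spectrum ℂ X, ‖μ‖ < 1) : Tendsto (fun k : ℕ => X ^ k) atTop (𝓝 0) :=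
  tendsto_pow_atTop_nhds_zero_of_spectralRadius_lt_one
    (spectralRadius_lt_one_of_forall_norm_lt_one hX)

end

theorem tendsto_pow_atTop_nhds_zero_of_forall_mem_spectrum_map {X : Matrix n n ℝ}
    (hX : ∀ μ ∈ spectrum ℂ (X.map Complex.ofRealHom), ‖μ‖ < 1) :
    Tendsto (fun k : ℕ => X ^ k) atTop (𝓝 0) := by
  have hre : Continuous fun Y : Matrix n n ℂ => Y.map Complex.re :=
    continuous_id.matrix_map Complex.continuous_re
  convert (hre.tendsto 0).comp (tendsto_pow_atTop_nhds_zero_of_forall_mem_spectrum hX) using 1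
  · ext k i j
    simp [← Matrix.map_pow]
  · simp

end Spectrum

theorem tendsto_mulVec_atTop_nhds_zero {m n : Type*} [Fintype m] [Fintype n]
    {X : ℕ → Matrix m n ℝ} (hX : Tendsto X atTop (𝓝 0)) {x : ℕ → n → ℝ} {R : ℝ}
    (hx : ∀ k, ‖x k‖ ≤ R) : Tendsto (fun k => X k *ᵥ x k) atTop (𝓝 0) := by
  let := Matrix.linftyOpNormedAddCommGroup (m := m) (n := n) (α := ℝ)
  refine squeeze_zero_norm (fun k => (Matrix.linfty_opNorm_mulVec _ _).trans
    (mul_le_mul_of_nonneg_left (hx k) (norm_nonneg (X k)))) ?_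
  simpa using hX.norm.mul_const R

end Matrix

noncomputable def Minv (A B C : ℤ) : Matrix (Fin 3) (Fin 3) ℝ :=
  !![-(B : ℝ) / C, 1, 0; -(A : ℝ) / C, 0, 1; -1 / C, 0, 0]

section Tile

variable {A B C : ℤ} {T : Set (Fin 3 → ℝ)}

theorem Minv_mul_Mmat (hC : C ≠ 0) : Minv A B C * Mmat A B C = 1 := by
  have hC' : (C : ℝ) ≠ 0 := by exact_mod_cast hC
  ext i j
  fin_cases i <;> fin_cases j <;>
    simp [Minv, Mmat, Matrix.mul_apply, Fin.sum_univ_three] <;> field_simp <;> ring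

theorem norm_lt_one_of_mem_spectrum_Minv (hA : 1 ≤ A) (hAB : A ≤ B) (hBC : B < C) {μ : ℂ}
    (hμ : μ ∈ spectrum ℂ ((Minv A B C).map Complex.ofRealHom)) : ‖μ‖ < 1 := by
  have hC : (C : ℂ) ≠ 0 := by exact_mod_cast (show C ≠ 0 by omega)
  have hchar : C * μ ^ 3 + B * μ ^ 2 + A * μ + 1 = 0 := by
    rw [Matrix.mem_spectrum_iff_isRoot_charpoly, Polynomial.IsRoot, Matrix.eval_charpoly,
      Matrix.det_fin_three] at hμ
    simp [Minv] at hμ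
    field_simp at hμ
    linear_combination hμ
  have hμ0 : μ ≠ 0 := by rintro rfl; simp at hchar
  have hroot : μ⁻¹ ^ 3 + (A : ℝ) * μ⁻¹ ^ 2 + (B : ℝ) * μ⁻¹ + (C : ℝ) = 0 := by
    field_simp
    linear_combination hchar
  have := one_lt_norm_of_cubic_eq_zero (by exact_mod_cast hA) (by exact_mod_cast hAB)
    (by exact_mod_cast hBC) hroot
  rwa [norm_inv, one_lt_inv₀ (norm_pos_iff.2 hμ0)] at this

theorem IsABCTile.C_pos (hT : IsABCTile A B C T) : 0 < C := by
  obtain ⟨hA, hAB, hBC, -⟩ := hT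
  omega

theorem IsABCTile.tendsto_Minv_pow (hT : IsABCTile A B C T) :
    Tendsto (fun n : ℕ => Minv A B C ^ n) atTop (𝓝 0) :=
  Matrix.tendsto_pow_atTop_nhds_zero_of_forall_mem_spectrum_map fun _ =>
    norm_lt_one_of_mem_spectrum_Minv hT.1 hT.2.1 hT.2.2.1

theorem IsABCTile.isCompact_sub (hT : IsABCTile A B C T) : IsCompact (T - T) := by
  rw [sub_eq_add_neg]
  exact hT.2.2.2.2.1.add hT.2.2.2.2.1.neg

@[simp] theorem toR_apply (α : Fin 3 → ℤ) (i : Fin 3) : toR α i = α i := rfl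

theorem toR_add (u v : Fin 3 → ℤ) : toR (u + v) = toR u + toR v := by
  ext i; simp

theorem toR_sub (u v : Fin 3 → ℤ) : toR (u - v) = toR u - toR v := by
  ext i; simp

theorem mem_tileTranslate {v x : Fin 3 → ℝ} : x ∈ tileTranslate v T ↔ x - v ∈ T := by
  simp [tileTranslate, ← sub_eq_add_neg]

theorem inter_tileTranslate_nonempty_iff {v : Fin 3 → ℝ} :
    (T ∩ tileTranslate v T).Nonempty ↔ v ∈ T - T := by
  simp only [Set.Nonempty, Set.mem_inter_iff, mem_tileTranslate, Set.mem_sub]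
  constructor
  · rintro ⟨x, hx, hxv⟩
    exact ⟨x, hx, x - v, hxv, sub_sub_cancel x v⟩
  · rintro ⟨x, hx, y, hy, rfl⟩
    exact ⟨x, hx, by rwa [sub_sub_cancel]⟩

theorem mem_tileTranslate_inter_iff {p α : Fin 3 → ℤ} {x : Fin 3 → ℝ} :
    x ∈ tileTranslate (toR p) (T ∩ tileTranslate (toR α) T) ↔
      x - toR p ∈ T ∧ x - toR (p + α) ∈ T := by
  rw [mem_tileTranslate, Set.mem_inter_iff, mem_tileTranslate, toR_add, sub_sub]

theorem toR_sub_mem_sub {p q : Fin 3 → ℤ} {x : Fin 3 → ℝ} (hp : x - toR p ∈ T)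
    (hq : x - toR q ∈ T) : toR (q - p) ∈ T - T :=
  ⟨_, hp, _, hq, (sub_sub_sub_cancel_left _ _ _).trans (toR_sub q p).symm⟩

theorem Minv_mulVec_add_digit_mem (hT : IsABCTile A B C T) {t : Fin 3 → ℝ} (ht : t ∈ T)
    {b : ℤ} (hb0 : 0 ≤ b) (hbC : b < C) : Minv A B C *ᵥ (t + ![(b : ℝ), 0, 0]) ∈ T := by
  have hM : t + ![(b : ℝ), 0, 0] ∈ (Mmat A B C).mulVec '' T := by
    rw [hT.2.2.2.2.2.2]
    exact Set.mem_biUnion ⟨b, hb0, hbC, rfl⟩ ⟨t, ht, rfl⟩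
  obtain ⟨s, hs, hMs⟩ := hM
  rwa [← hMs, Matrix.mulVec_mulVec, Minv_mul_Mmat hT.C_pos.ne', Matrix.one_mulVec]

-- Write `c = b - a` with digits `a, b ∈ [0, C)`.
theorem Minv_mulVec_add_mem_sub (hT : IsABCTile A B C T) {d : Fin 3 → ℝ} (hd : d ∈ T - T)
    {c : ℤ} (hc : |c| < C) : Minv A B C *ᵥ (d + ![(c : ℝ), 0, 0]) ∈ T - T := by
  obtain ⟨x, hx, y, hy, rfl⟩ := hd
  rw [abs_lt] at hc
  refine ⟨_, Minv_mulVec_add_digit_mem hT hx (b := max c 0) (by omega) (by omega),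
    _, Minv_mulVec_add_digit_mem hT hy (b := max (-c) 0) (by omega) (by omega), ?_⟩
  dsimp only
  rw [← Matrix.mulVec_sub]
  congr 1
  have hdigits : ![((max c 0 : ℤ) : ℝ), 0, 0] =
      ![((max (-c) 0 : ℤ) : ℝ), 0, 0] + ![(c : ℝ), 0, 0] := by
    have : ((max c 0 : ℤ) : ℝ) = ((max (-c) 0 : ℤ) : ℝ) + c := by
      exact_mod_cast (by omega : max c 0 = max (-c) 0 + c)
    simp [this]
  rw [hdigits]
  abel

def DigitStep (A B C : ℤ) (v w : Fin 3 → ℤ) : Prop :=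
  ∃ c : ℤ, |c| < C ∧ Mmat A B C *ᵥ toR v = toR w + ![(c : ℝ), 0, 0]

theorem Mmat_mulVec_toR (v : Fin 3 → ℤ) :
    Mmat A B C *ᵥ toR v = toR ![-C * v 2, v 0 - B * v 2, v 1 - A * v 2] := by
  ext i; fin_cases i <;> simp [Mmat, Matrix.mulVec, dotProduct, Fin.sum_univ_three] <;> ring

theorem digitStep_iff {v w : Fin 3 → ℤ} :
    DigitStep A B C v w ↔
      |-C * v 2 - w 0| < C ∧ w 1 = v 0 - B * v 2 ∧ w 2 = v 1 - A * v 2 := by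
  simp only [DigitStep, Mmat_mulVec_toR, funext_iff, Fin.forall_fin_succ]
  simp only [Fin.isValue, neg_mul, toR_apply, Matrix.cons_val_zero, Int.cast_neg, Int.cast_mul,
    Nat.succ_eq_add_one, Nat.reduceAdd, Pi.add_apply, Fin.succ_zero_eq_one, Matrix.cons_val_one,
    Int.cast_sub, add_zero, Fin.succ_one_eq_two, Matrix.cons_val, Matrix.cons_val_succ,
    Matrix.cons_val_fin_one, IsEmpty.forall_iff, and_true]
  norm_cast
  constructor
  · rintro ⟨c, hc, h0, h1, h2⟩
    exact ⟨by rwa [show -(C * v 2) - w 0 = c by omega], h1.symm, h2.symm⟩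
  · rintro ⟨hc, h1, h2⟩
    exact ⟨_, hc, by ring, h1.symm, h2.symm⟩

theorem toR_sub_Minv_pow_mulVec_mem_sub (hT : IsABCTile A B C T) {V : Set (Fin 3 → ℤ)}
    (hstep : ∀ v ∈ V, ∃ w ∈ V, DigitStep A B C v w) (n : ℕ) :
    ∀ v ∈ V, ∃ u ∈ V, toR v - (Minv A B C ^ n) *ᵥ toR u ∈ T - T := by
  induction n with
  | zero =>
    obtain ⟨t, ht⟩ := hT.2.2.2.1
    exact fun v hv => ⟨v, hv, by simpa using Set.sub_mem_sub ht ht⟩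
  | succ n ih =>
    intro v hv
    obtain ⟨w, hw, c, hc, hMv⟩ := hstep v hv
    obtain ⟨u, hu, hmem⟩ := ih w hw
    refine ⟨u, hu, ?_⟩
    convert Minv_mulVec_add_mem_sub hT hmem hc using 1
    have hinv : Minv A B C *ᵥ (Mmat A B C *ᵥ toR v) = toR v := by
      rw [Matrix.mulVec_mulVec, Minv_mul_Mmat hT.C_pos.ne', Matrix.one_mulVec]
    rw [sub_add_eq_add_sub, ← hMv, Matrix.mulVec_sub, hinv, Matrix.mulVec_mulVec, ← pow_succ']

theorem toR_mem_sub_of_forall_digitStep (hT : IsABCTile A B C T) {V : Set (Fin 3 → ℤ)}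
    (hV : V.Finite) (hstep : ∀ v ∈ V, ∃ w ∈ V, DigitStep A B C v w) {v : Fin 3 → ℤ}
    (hv : v ∈ V) : toR v ∈ T - T := by
  choose u hu hmem using fun n => toR_sub_Minv_pow_mulVec_mem_sub hT hstep n v hv
  obtain ⟨R, hR⟩ := (hV.image toR).isBounded.exists_norm_le
  have hlim : Tendsto (fun n => toR v - (Minv A B C ^ n) *ᵥ toR (u n)) atTop (𝓝 (toR v)) := by
    simpa using tendsto_const_nhds.sub <| Matrix.tendsto_mulVec_atTop_nhds_zero
      hT.tendsto_Minv_pow fun n => hR _ ⟨u n, hu n, rfl⟩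
  exact hT.isCompact_sub.isClosed.mem_of_tendsto hlim (Eventually.of_forall hmem)

theorem neighbors_finite (hT : IsABCTile A B C T) : (Neighbors T).Finite := by
  have htoR : Tendsto toR cofinite (cocompact _) := by
    have := Tendsto.pi_map_coprodᵢ fun _ : Fin 3 => Int.tendsto_coe_cofinite
    rwa [coprodᵢ_cofinite, coprodᵢ_cocompact] at this
  exact (tendsto_cofinite_cocompact_iff.1 htoR _ hT.isCompact_sub).subset fun α hα =>
    inter_tileTranslate_nonempty_iff.1 hα.2

end Tile

section Fourteen

variable {A B C : ℤ} {T : Set (Fin 3 → ℝ)}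

def abcNeighbors (A B : ℤ) : Set (Fin 3 → ℤ) :=
  {![1, 0, 0], ![A - 1, 1, 0], ![A, 1, 0], ![B - A, A - 1, 1], ![B - A + 1, A - 1, 1],
    ![B - 1, A, 1], ![B, A, 1], ![-1, 0, 0], ![1 - A, -1, 0], ![-A, -1, 0],
    ![A - B, 1 - A, -1], ![A - B - 1, 1 - A, -1], ![1 - B, -A, -1], ![-B, -A, -1]}

theorem mem_abcNeighbors_iff {v : Fin 3 → ℤ} :
    v ∈ abcNeighbors A B ↔
      (v 0 = 1 ∧ v 1 = 0 ∧ v 2 = 0) ∨ (v 0 = A - 1 ∧ v 1 = 1 ∧ v 2 = 0) ∨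
      (v 0 = A ∧ v 1 = 1 ∧ v 2 = 0) ∨ (v 0 = B - A ∧ v 1 = A - 1 ∧ v 2 = 1) ∨
      (v 0 = B - A + 1 ∧ v 1 = A - 1 ∧ v 2 = 1) ∨ (v 0 = B - 1 ∧ v 1 = A ∧ v 2 = 1) ∨
      (v 0 = B ∧ v 1 = A ∧ v 2 = 1) ∨ (v 0 = -1 ∧ v 1 = 0 ∧ v 2 = 0) ∨
      (v 0 = 1 - A ∧ v 1 = -1 ∧ v 2 = 0) ∨ (v 0 = -A ∧ v 1 = -1 ∧ v 2 = 0) ∨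
      (v 0 = A - B ∧ v 1 = 1 - A ∧ v 2 = -1) ∨ (v 0 = A - B - 1 ∧ v 1 = 1 - A ∧ v 2 = -1) ∨
      (v 0 = 1 - B ∧ v 1 = -A ∧ v 2 = -1) ∨ (v 0 = -B ∧ v 1 = -A ∧ v 2 = -1) := by
  simp [abcNeighbors, funext_iff, Fin.forall_fin_succ]

theorem ncard_abcNeighbors : (abcNeighbors A B).ncard = 14 := by
  rw [abcNeighbors]
  repeat rw [Set.ncard_insert_of_notMem (by simp [funext_iff, Fin.forall_fin_succ] <;> omega)]
  rw [Set.ncard_singleton]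

theorem exists_digitStep_abcNeighbors (hA : 1 ≤ A) (hAB : A ≤ B) (hBC : B < C) :
    ∀ v ∈ abcNeighbors A B, ∃ w ∈ abcNeighbors A B, DigitStep A B C v w := by
  intro v hv
  rcases hv with
    rfl | rfl | rfl | rfl | rfl | rfl | rfl | rfl | rfl | rfl | rfl | rfl | rfl | rfl <;>
  [use ![A - 1, 1, 0]; use ![B - A, A - 1, 1]; use ![B - 1, A, 1]; use ![-B, -A, -1];
    use ![A - B - 1, 1 - A, -1]; use ![-A, -1, 0]; use ![-1, 0, 0];
    use ![1 - A, -1, 0]; use ![A - B, 1 - A, -1]; use ![1 - B, -A, -1]; use ![B, A, 1];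
    use ![B - A + 1, A - 1, 1]; use ![A, 1, 0]; use ![1, 0, 0]] <;>
  refine ⟨by simp only [abcNeighbors, Set.mem_insert_iff, Set.mem_singleton_iff, true_or, or_true],
    digitStep_iff.2 ?_⟩ <;> simp [abs_lt] <;> omega

theorem abcNeighbors_subset_neighbors (hT : IsABCTile A B C T) :
    abcNeighbors A B ⊆ Neighbors T := by
  intro v hv
  refine ⟨?_, inter_tileTranslate_nonempty_iff.2 <| toR_mem_sub_of_forall_digitStep hT
    (by rw [abcNeighbors]; exact Set.toFinite _)
    (exists_digitStep_abcNeighbors hT.1 hT.2.1 hT.2.2.1) hv⟩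
  rintro rfl
  simp [mem_abcNeighbors_iff] at hv

theorem neighbors_eq_abcNeighbors (hT : IsABCTile A B C T) (h14 : (Neighbors T).ncard = 14) :
    Neighbors T = abcNeighbors A B :=
  (Set.eq_of_subset_of_ncard_le (abcNeighbors_subset_neighbors hT)
    (by rw [h14, ncard_abcNeighbors]) (neighbors_finite hT)).symm

theorem eq_zero_or_mem_abcNeighbors (hT : IsABCTile A B C T) (h14 : (Neighbors T).ncard = 14)
    {γ : Fin 3 → ℤ} (hγ : toR γ ∈ T - T) : γ = 0 ∨ γ ∈ abcNeighbors A B := by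
  rw [← neighbors_eq_abcNeighbors hT h14]
  by_cases h0 : γ = 0
  · exact Or.inl h0
  · exact Or.inr ⟨h0, inter_tileTranslate_nonempty_iff.2 hγ⟩

end Fourteen

theorem stmt19_general (A B C : ℤ) (T : Set (Fin 3 → ℝ)) (hT : IsABCTile A B C T)
    (h14 : (Neighbors T).ncard = 14) (α : Fin 3 → ℤ) (hα : α ∈ Neighbors T)
    (i j : ℤ) (hj : 1 ≤ j) :
    tileTranslate (toR ((i - j) • ![1, 0, 0])) (T ∩ tileTranslate (toR α) T) ∩
      tileTranslate (toR (i • ![1, 0, 0])) (T ∩ tileTranslate (toR α) T) = ∅ ∧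
    tileTranslate (toR ((i - j) • ![1, 0, 0])) (T ∩ tileTranslate (toR α) T) ∩
      tileTranslate (toR (i • ![1, 0, 0])) (T ∩ tileTranslate (toR (α + ![1, 0, 0])) T) = ∅ := by
  have hαS := mem_abcNeighbors_iff.1 (neighbors_eq_abcNeighbors hT h14 ▸ hα)
  have hB : ∀ {γ}, toR γ ∈ T - T → γ = 0 ∨ γ ∈ abcNeighbors A B :=
    eq_zero_or_mem_abcNeighbors hT h14
  simp only [Set.eq_empty_iff_forall_notMem, Set.mem_inter_iff, mem_tileTranslate_inter_iff]
  constructor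
  · rintro x ⟨⟨h1, h1α⟩, h2, h2α⟩
    have hP := hB (toR_sub_mem_sub h1 h2)
    have hPα := hB (toR_sub_mem_sub h1 h2α)
    have hPα' := hB (toR_sub_mem_sub h1α h2)
    simp [funext_iff, Fin.forall_fin_succ, mem_abcNeighbors_iff, Matrix.vecHead,
      Matrix.vecTail] at hP hPα hPα'
    omega
  · rintro x ⟨⟨-, h1α⟩, -, h2α⟩
    have hP := hB (toR_sub_mem_sub h1α h2α)
    simp [funext_iff, Fin.forall_fin_succ, mem_abcNeighbors_iff, Matrix.vecHead,
      Matrix.vecTail] at hP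
    omega

theorem stmt19 (A B C : ℤ) (T : Set (Fin 3 → ℝ)) (hT : IsABCTile A B C T)
    (h14 : (Neighbors T).ncard = 14) (α : Fin 3 → ℤ) (hα : α ∈ Neighbors T)
    (i j : ℤ) (hj : 1 ≤ j) (hij : j ≤ i) (hi : i ≤ C - 1) :
    tileTranslate (toR ((i - j) • ![1, 0, 0])) (T ∩ tileTranslate (toR α) T) ∩
      tileTranslate (toR (i • ![1, 0, 0])) (T ∩ tileTranslate (toR α) T) = ∅ ∧
    tileTranslate (toR ((i - j) • ![1, 0, 0])) (T ∩ tileTranslate (toR α) T) ∩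
      tileTranslate (toR (i • ![1, 0, 0])) (T ∩ tileTranslate (toR (α + ![1, 0, 0])) T) = ∅ :=
  stmt19_general A B C T hT h14 α hα i j hj
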